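/- Let (Y,d) be a weak metric space and j ≥ 2. The map H : [0,1] × Cone(Y,j) → (ℝ × ℝ × Y)^j that at time s replaces each triple (a_i, b_i, y_i) of κ by ((1−s)a_i + s(c_i − v), (1−s)b_i + s(c_i + v), y_i), where c_i = (a_i + b_i)/2 and v = v(φ_j(κ)), takes values in Cone(Y,j) for every s ∈ [0,1], and defines a homotopy from the identity of Cone(Y,j) to φ̄_j ∘ φ_j. Consequently φ_j : Cone(Y,j) → F(ℝ × Y, j) is a homotopy equivalence with homotopy inverse φ̄_j. -/

import Mathlib

open unitInterval Topology

noncomputable section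

universe u v

/-! ### Basic configuration/cone sets -/

/-- The configuration set: tuples with pairwise distinct coordinates. -/
def ConfigSet (Z : Type*) (j : ℕ) : Set (Fin j → Z) :=
  {f | Function.Injective f}

/-- `Cone(Y,j)`: tuples of triples `(a,b,y)` with `a < b` and, whenever two triples
carry the same point of `Y`, the corresponding intervals have disjoint interiors. -/
def ConeSet (Y : Type*) (j : ℕ) : Set (Fin j → ℝ × ℝ × Y) :=
  {f | (∀ i, (f i).1 < (f i).2.1) ∧
    ∀ k l, k ≠ l → (f k).2.2 = (f l).2.2 → (f k).2.1 ≤ (f l).1 ∨ (f l).2.1 ≤ (f k).1}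

/-- A weak metric on a space `Y`. -/
structure IsWeakMetric {Y : Type*} [TopologicalSpace Y] (d : Y → Y → ℝ) : Prop where
  continuous : Continuous fun p : Y × Y => d p.1 p.2
  nonneg : ∀ y y', 0 ≤ d y y'
  eq_zero_iff : ∀ y y', d y y' = 0 ↔ y = y'

/-- The auxiliary weak metric `g` on `ℝ × Y`. -/
def gfun {Y : Type*} (d : Y → Y → ℝ) (p q : ℝ × Y) : ℝ :=
  (1 / 2) * ((|p.1 - q.1| ^ 2 + d p.2 q.2) / (|p.1 - q.1| + d p.2 q.2 + 1))

/-- `v(κ) = min_{k ≠ l} g(κ k, κ l)`. -/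
def vfun {Y : Type*} (d : Y → Y → ℝ) {j : ℕ} (κ : Fin j → ℝ × Y) : ℝ :=
  ⨅ p : {p : Fin j × Fin j // p.1 ≠ p.2}, gfun d (κ p.1.1) (κ p.1.2)

/-- `φ_j`: sends each segment to its center point. -/
def centersFun {Y : Type*} {j : ℕ} (κ : Fin j → ℝ × ℝ × Y) : Fin j → ℝ × Y :=
  fun i => (((κ i).1 + (κ i).2.1) / 2, (κ i).2.2)

/-- `φ̄_j`: thickens each point into an interval of radius `v(κ)`. -/
def phibarFun {Y : Type*} (d : Y → Y → ℝ) {j : ℕ} (κ : Fin j → ℝ × Y) :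
    Fin j → ℝ × ℝ × Y :=
  fun i => ((κ i).1 - vfun d κ, (κ i).1 + vfun d κ, (κ i).2)

/-- `shrink_{s,t}`: linearly compress segments from `(0,1)` into `(s,t)`. -/
def shrinkFun {Y : Type*} (s t : ℝ) {j : ℕ} (κ : Fin j → ℝ × ℝ × Y) :
    Fin j → ℝ × ℝ × Y :=
  fun i => (s + (t - s) * (κ i).1, s + (t - s) * (κ i).2.1, (κ i).2.2)

theorem ConeSet.comp {Y : Type*} {i j : ℕ} {f : Fin j → ℝ × ℝ × Y} (hf : f ∈ ConeSet Y j)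
    {ν : Fin i → Fin j} (hν : Function.Injective ν) : (f ∘ ν) ∈ ConeSet Y i :=
  ⟨fun k => hf.1 (ν k), fun k l hkl h => hf.2 (ν k) (ν l) (fun e => hkl (hν e)) h⟩

/-! ### Labeled configuration spaces -/

/-- Generators for the equivalence relation defining `C(Y,X)`. -/
inductive ConfigRel (Y : Type u) (X : Type v) (x₀ : X) :
    (Σ j : ℕ, ↥(ConfigSet Y j) × (Fin j → X)) →
    (Σ j : ℕ, ↥(ConfigSet Y j) × (Fin j → X)) → Prop
  | mk {i j : ℕ} (ν : Fin i → Fin j) (hν : Function.Injective ν)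
      (y : ↥(ConfigSet Y j)) (x : Fin i → X) :
      ConfigRel Y X x₀ ⟨i, ⟨y.1 ∘ ν, y.2.comp hν⟩, x⟩
        ⟨j, y, Function.extend ν x fun _ => x₀⟩

/-- The labeled configuration space `C(Y, X)`. -/
def LabeledConfig (Y : Type u) (X : Type v) (x₀ : X) : Type (max u v) :=
  Quot (ConfigRel Y X x₀)

instance {Y : Type u} {X : Type v} {x₀ : X} [TopologicalSpace Y] [TopologicalSpace X] :
    TopologicalSpace (LabeledConfig Y X x₀) :=
  inferInstanceAs (TopologicalSpace (Quot (ConfigRel Y X x₀)))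

/-- The empty configuration. -/
def emptyConfig (Y : Type u) : ↥(ConfigSet Y 0) :=
  ⟨Fin.elim0, Function.injective_of_subsingleton _⟩

/-- The basepoint of `C(Y,X)`: the empty configuration. -/
def LabeledConfig.base (Y : Type u) (X : Type v) (x₀ : X) : LabeledConfig Y X x₀ :=
  Quot.mk _ ⟨0, emptyConfig Y, Fin.elim0⟩

/-- Generators for the equivalence relation defining `C₁(Y,X)`. -/
inductive Cone1Rel (Y : Type u) (X : Type v) (x₀ : X) :
    (Σ j : ℕ, ↥(ConeSet Y j) × (Fin j → X)) →
    (Σ j : ℕ, ↥(ConeSet Y j) × (Fin j → X)) → Prop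
  | mk {i j : ℕ} (ν : Fin i → Fin j) (hν : Function.Injective ν)
      (κ : ↥(ConeSet Y j)) (x : Fin i → X) :
      Cone1Rel Y X x₀ ⟨i, ⟨κ.1 ∘ ν, ConeSet.comp κ.2 hν⟩, x⟩
        ⟨j, κ, Function.extend ν x fun _ => x₀⟩

/-- The labeled space of segments `C₁(Y, X)`. -/
def LabeledCone (Y : Type u) (X : Type v) (x₀ : X) : Type (max u v) :=
  Quot (Cone1Rel Y X x₀)

instance {Y : Type u} {X : Type v} {x₀ : X} [TopologicalSpace Y] [TopologicalSpace X] :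
    TopologicalSpace (LabeledCone Y X x₀) :=
  inferInstanceAs (TopologicalSpace (Quot (Cone1Rel Y X x₀)))

/-- `C̄₁(Y,X)` : classes of configurations of segments with endpoints in `(0,1)`. -/
def BarC1Set (Y : Type u) (X : Type v) (x₀ : X) : Set (LabeledCone Y X x₀) :=
  {w | ∃ (j : ℕ) (κ : ↥(ConeSet Y j)) (x : Fin j → X),
    w = Quot.mk _ ⟨j, κ, x⟩ ∧ ∀ i, 0 < (κ.1 i).1 ∧ (κ.1 i).2.1 < 1}

/-! ### Suspension, cofibrations -/

/-- The relation collapsing `X × {0,1} ∪ {x₀} × I` to a point. -/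
def SuspRel (X : Type v) (x₀ : X) : X × I → X × I → Prop := fun p q =>
  (p.2 = 0 ∨ p.2 = 1 ∨ p.1 = x₀) ∧ (q.2 = 0 ∨ q.2 = 1 ∨ q.1 = x₀)

/-- The reduced suspension `ΣX`. -/
def Susp (X : Type v) (x₀ : X) : Type v :=
  Quot (SuspRel X x₀)

instance {X : Type v} {x₀ : X} [TopologicalSpace X] : TopologicalSpace (Susp X x₀) :=
  inferInstanceAs (TopologicalSpace (Quot (SuspRel X x₀)))

/-- The class `[x, t]` in `ΣX`. -/
def Susp.mk {X : Type v} (x₀ : X) (x : X) (t : I) : Susp X x₀ :=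
  Quot.mk _ (x, t)

/-- The basepoint of `ΣX`. -/
def Susp.base {X : Type v} (x₀ : X) : Susp X x₀ :=
  Quot.mk _ (x₀, 0)

/-- A map is a cofibration if it has the homotopy extension property. -/
def IsCofibration {A : Type*} {B : Type v} [TopologicalSpace A] [TopologicalSpace B]
    (φ : C(A, B)) : Prop :=
  ∀ (Z : Type v) (_ : TopologicalSpace Z) (f : C(B, Z)) (H : C(A × I, Z)),
    (∀ a, H (a, 0) = f (φ a)) →
    ∃ G : C(B × I, Z), (∀ b, G (b, 0) = f b) ∧ ∀ a t, G (φ a, t) = H (a, t)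

/-- A based space is nondegenerately based if the inclusion of the basepoint
is a cofibration. -/
def NondegeneratelyBased {X : Type v} [TopologicalSpace X] (x₀ : X) : Prop :=
  IsCofibration ⟨fun _ : Unit => x₀, continuous_const⟩

/-! ### Homotopy equivalences and weak homotopy equivalences -/

/-- A continuous map is a homotopy equivalence if it has a homotopy inverse. -/
def IsHomotopyEquiv {A : Type*} {B : Type*} [TopologicalSpace A] [TopologicalSpace B]
    (f : C(A, B)) : Prop :=
  ∃ g : C(B, A), (g.comp f).Homotopic (ContinuousMap.id A) ∧
    (f.comp g).Homotopic (ContinuousMap.id B)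

/-- The map induced on path components by a continuous map. -/
def zerothHomotopyMap {A : Type*} {B : Type*} [TopologicalSpace A] [TopologicalSpace B]
    (f : C(A, B)) : ZerothHomotopy A → ZerothHomotopy B :=
  Quotient.map f fun _ _ h => ⟨h.somePath.map f.continuous⟩

/-- The map induced on homotopy groups by a continuous map. -/
def homotopyGroupMap {A : Type*} {B : Type*} [TopologicalSpace A] [TopologicalSpace B]
    (f : C(A, B)) (N : Type*) (a : A) :
    HomotopyGroup N A a → HomotopyGroup N B (f a) :=
  Quotient.map (fun p => ⟨f.comp p.1, fun y hy => by
      simp only [ContinuousMap.comp_apply]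
      exact congrArg f (p.2 y hy)⟩)
    fun p q h => h.map fun H => H.compContinuousMap f

/-- A continuous map is a weak homotopy equivalence if it induces a bijection on path
components and isomorphisms on all homotopy groups at every basepoint. -/
def IsWeakHomotopyEquiv {A : Type*} {B : Type*} [TopologicalSpace A] [TopologicalSpace B]
    (f : C(A, B)) : Prop :=
  Function.Bijective (zerothHomotopyMap f) ∧
    ∀ (n : ℕ) (a : A), Function.Bijective (homotopyGroupMap f (Fin n) a)

variable {Y : Type u} [TopologicalSpace Y]

/-- The straight-line homotopy from the identity of `Cone(Y,j)` to `φ̄_j ∘ φ_j`. -/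
noncomputable def coneHomotopyFun (d : Y → Y → ℝ) {j : ℕ} (s : ℝ) (κ : Fin j → ℝ × ℝ × Y) :
    Fin j → ℝ × ℝ × Y :=
  fun i =>
    ((1 - s) * (κ i).1 + s * ((((κ i).1 + (κ i).2.1) / 2) - vfun d (centersFun κ)),
     (1 - s) * (κ i).2.1 + s * ((((κ i).1 + (κ i).2.1) / 2) + vfun d (centersFun κ)),
     (κ i).2.2)

/-! For two points of `ℝ × Y` with the same label, `2 g(p, q) ≤ |p.1 - q.1|`. Hence, for
`κ ∈ F(ℝ × Y, j)`, intervals of radius `v(κ)` around points with equal labels have disjoint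
interiors, and `v(κ) > 0` as a minimum of finitely many positive numbers, so `φ̄_j` lands in
`Cone(Y, j)`; clearly `φ_j ∘ φ̄_j = id`. Along the straight-line homotopy from `κ` to
`φ̄_j (φ_j κ)`, segments with equal labels stay apart: `b_k ≤ a_l` forces `c_k < c_l`, hence
`c_k + v ≤ c_l - v`, and the moving endpoints are convex combinations of these two ordered
pairs. Everything is continuous because `v` is a finite minimum of continuous functions. -/

section Combinatorics

omit [TopologicalSpace Y]

variable {d : Y → Y → ℝ} {j : ℕ}

lemma centersFun_injective {κ : Fin j → ℝ × ℝ × Y} (hκ : κ ∈ ConeSet Y j) :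
    Function.Injective (centersFun κ) := by
  intro k l h
  by_contra hkl
  simp only [centersFun, Prod.mk.injEq] at h
  have hk := hκ.1 k
  have hl := hκ.1 l
  rcases hκ.2 k l hkl h.2 with h' | h' <;> linarith [h.1]

lemma centersFun_phibarFun (κ : Fin j → ℝ × Y) : centersFun (phibarFun d κ) = κ := by
  funext i
  simp only [centersFun, phibarFun]
  exact Prod.ext (by ring) rfl

lemma coneHomotopyFun_zero (κ : Fin j → ℝ × ℝ × Y) : coneHomotopyFun d 0 κ = κ := by
  funext i
  simp [coneHomotopyFun]

lemma coneHomotopyFun_one (κ : Fin j → ℝ × ℝ × Y) :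
    coneHomotopyFun d 1 κ = phibarFun d (centersFun κ) := by
  funext i
  simp [coneHomotopyFun, phibarFun, centersFun]

end Combinatorics

section WeakMetric

variable {d : Y → Y → ℝ} {j : ℕ}

lemma gfun_pos (hd : IsWeakMetric d) {p q : ℝ × Y} (hpq : p ≠ q) : 0 < gfun d p q := by
  have hd₀ := hd.nonneg p.2 q.2
  have hnum : 0 < |p.1 - q.1| ^ 2 + d p.2 q.2 := by
    by_cases h₁ : p.1 = q.1
    · have h₂ : d p.2 q.2 ≠ 0 := fun h => hpq (Prod.ext h₁ ((hd.eq_zero_iff _ _).mp h))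
      positivity
    · have : 0 < |p.1 - q.1| := abs_pos.mpr (sub_ne_zero.mpr h₁)
      positivity
  unfold gfun
  positivity

lemma two_mul_gfun_le_of_snd_eq (hd : IsWeakMetric d) {p q : ℝ × Y} (h : p.2 = q.2) :
    2 * gfun d p q ≤ |p.1 - q.1| := by
  have ha := abs_nonneg (p.1 - q.1)
  rw [gfun, (hd.eq_zero_iff _ _).mpr h, add_zero, add_zero, ← mul_assoc,
    show (2 : ℝ) * (1 / 2) = 1 by norm_num, one_mul, div_le_iff₀ (by positivity)]
  nlinarith

lemma continuous_gfun (hd : IsWeakMetric d) :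
    Continuous fun pq : (ℝ × Y) × (ℝ × Y) => gfun d pq.1 pq.2 := by
  have habs : Continuous fun pq : (ℝ × Y) × (ℝ × Y) => |pq.1.1 - pq.2.1| := by fun_prop
  have hdc : Continuous fun pq : (ℝ × Y) × (ℝ × Y) => d pq.1.2 pq.2.2 :=
    hd.continuous.comp (continuous_fst.snd.prodMk continuous_snd.snd)
  refine continuous_const.mul (((habs.pow 2).add hdc).div ((habs.add hdc).add continuous_const)
    fun pq => ?_)
  have := hd.nonneg pq.1.2 pq.2.2
  positivity

lemma nonempty_offDiag_pairs (hj : 2 ≤ j) : Nonempty {p : Fin j × Fin j // p.1 ≠ p.2} :=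
  ⟨⟨(⟨0, by omega⟩, ⟨1, by omega⟩), by simp [Fin.ext_iff]⟩⟩

lemma vfun_pos (hd : IsWeakMetric d) (hj : 2 ≤ j) {κ : Fin j → ℝ × Y}
    (hκ : Function.Injective κ) : 0 < vfun d κ := by
  have := nonempty_offDiag_pairs hj
  obtain ⟨p, hp⟩ := exists_eq_ciInf_of_finite
    (f := fun p : {p : Fin j × Fin j // p.1 ≠ p.2} => gfun d (κ p.1.1) (κ p.1.2))
  rw [vfun, ← hp]
  exact gfun_pos hd fun h => p.2 (hκ h)

lemma continuous_vfun (hd : IsWeakMetric d) (hj : 2 ≤ j) :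
    Continuous fun κ : Fin j → ℝ × Y => vfun d κ := by
  have := nonempty_offDiag_pairs hj
  have hinf : ∀ κ : Fin j → ℝ × Y, Finset.univ.inf' Finset.univ_nonempty
      (fun p : {p : Fin j × Fin j // p.1 ≠ p.2} => gfun d (κ p.1.1) (κ p.1.2)) = vfun d κ :=
    fun κ => Finset.inf'_univ_eq_ciInf _
  refine (Continuous.finset_inf'_apply _ fun p _ => ?_).congr hinf
  have hpair : Continuous fun κ : Fin j → ℝ × Y => (κ p.1.1, κ p.1.2) := by fun_prop
  exact (continuous_gfun hd).comp hpair

lemma two_mul_vfun_le (hd : IsWeakMetric d) {κ : Fin j → ℝ × Y} {k l : Fin j} (hkl : k ≠ l)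
    (hy : (κ k).2 = (κ l).2) : 2 * vfun d κ ≤ |(κ k).1 - (κ l).1| :=
  calc 2 * vfun d κ ≤ 2 * gfun d (κ k) (κ l) := by
        gcongr
        exact ciInf_le (Set.finite_range _).bddBelow
          (⟨(k, l), hkl⟩ : {p : Fin j × Fin j // p.1 ≠ p.2})
    _ ≤ |(κ k).1 - (κ l).1| := two_mul_gfun_le_of_snd_eq hd hy

lemma add_vfun_le_sub_vfun (hd : IsWeakMetric d) {κ : Fin j → ℝ × Y} {k l : Fin j}
    (hkl : k ≠ l) (hy : (κ k).2 = (κ l).2) (hle : (κ k).1 ≤ (κ l).1) :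
    (κ k).1 + vfun d κ ≤ (κ l).1 - vfun d κ := by
  have h := two_mul_vfun_le hd hkl hy
  rw [abs_of_nonpos (by linarith)] at h
  linarith

lemma phibarFun_mem_coneSet (hd : IsWeakMetric d) (hj : 2 ≤ j) {κ : Fin j → ℝ × Y}
    (hκ : Function.Injective κ) : phibarFun d κ ∈ ConeSet Y j := by
  have hv := vfun_pos hd hj hκ
  refine ⟨fun i => by simp only [phibarFun]; linarith, fun k l hkl hy => ?_⟩
  simp only [phibarFun] at hy ⊢
  rcases le_total (κ k).1 (κ l).1 with h | h
  · exact Or.inl (add_vfun_le_sub_vfun hd hkl hy h)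
  · exact Or.inr (add_vfun_le_sub_vfun hd hkl.symm hy.symm h)

lemma coneHomotopyFun_mem_coneSet (hd : IsWeakMetric d) (hj : 2 ≤ j) {κ : Fin j → ℝ × ℝ × Y}
    (hκ : κ ∈ ConeSet Y j) {s : ℝ} (hs : s ∈ Set.Icc (0 : ℝ) 1) :
    coneHomotopyFun d s κ ∈ ConeSet Y j := by
  obtain ⟨hs₀, hs₁⟩ := hs
  have hv := vfun_pos hd hj (centersFun_injective hκ)
  have separated : ∀ k l, k ≠ l → (κ k).2.2 = (κ l).2.2 → (κ k).2.1 ≤ (κ l).1 →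
      (coneHomotopyFun d s κ k).2.1 ≤ (coneHomotopyFun d s κ l).1 := by
    intro k l hkl hy hle
    have hk := hκ.1 k
    have hl := hκ.1 l
    have hc := add_vfun_le_sub_vfun hd (κ := centersFun κ) hkl hy
      (by simp only [centersFun]; linarith)
    simp only [centersFun] at hc
    exact add_le_add (mul_le_mul_of_nonneg_left hle (by linarith))
      (mul_le_mul_of_nonneg_left hc hs₀)
  refine ⟨fun i => ?_, fun k l hkl hy => ?_⟩
  · have hi := hκ.1 i
    rcases hs₀.eq_or_lt with rfl | hs
    · simpa [coneHomotopyFun] using hi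
    · simp only [coneHomotopyFun]
      nlinarith [mul_pos hs hv, mul_nonneg (sub_nonneg.2 hs₁) (sub_nonneg.2 hi.le)]
  · rcases hκ.2 k l hkl hy with h | h
    · exact Or.inl (separated k l hkl hy h)
    · exact Or.inr (separated l k hkl.symm hy.symm h)

lemma continuous_centersFun :
    Continuous fun κ : Fin j → ℝ × ℝ × Y => centersFun κ :=
  continuous_pi fun i => by unfold centersFun; fun_prop

lemma continuous_phibarFun (hd : IsWeakMetric d) (hj : 2 ≤ j) :
    Continuous fun κ : Fin j → ℝ × Y => phibarFun d κ := by
  have := continuous_vfun hd hj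
  exact continuous_pi fun i => by unfold phibarFun; fun_prop

lemma continuous_coneHomotopyFun (hd : IsWeakMetric d) (hj : 2 ≤ j) :
    Continuous fun q : ℝ × (Fin j → ℝ × ℝ × Y) => coneHomotopyFun d q.1 q.2 := by
  have : Continuous fun q : ℝ × (Fin j → ℝ × ℝ × Y) => vfun d (centersFun q.2) :=
    (continuous_vfun hd hj).comp (continuous_centersFun.comp continuous_snd)
  exact continuous_pi fun i => by unfold coneHomotopyFun; fun_prop

variable (j) in
def centersMap : C(ConeSet Y j, ConfigSet (ℝ × Y) j) :=
  ⟨fun κ => ⟨centersFun κ.1, centersFun_injective κ.2⟩,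
    (continuous_centersFun.comp continuous_subtype_val).subtype_mk _⟩

def phibarMap (hd : IsWeakMetric d) (hj : 2 ≤ j) : C(ConfigSet (ℝ × Y) j, ConeSet Y j) :=
  ⟨fun κ => ⟨phibarFun d κ.1, phibarFun_mem_coneSet hd hj κ.2⟩,
    ((continuous_phibarFun hd hj).comp continuous_subtype_val).subtype_mk _⟩

lemma centersMap_comp_phibarMap (hd : IsWeakMetric d) (hj : 2 ≤ j) :
    (centersMap j).comp (phibarMap hd hj) = ContinuousMap.id _ := by
  ext κ : 2
  exact centersFun_phibarFun κ.1

def coneHomotopy (hd : IsWeakMetric d) (hj : 2 ≤ j) :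
    (ContinuousMap.id (ConeSet Y j)).Homotopy ((phibarMap hd hj).comp (centersMap j)) where
  toFun p := ⟨coneHomotopyFun d p.1 p.2.1, coneHomotopyFun_mem_coneSet hd hj p.2.2 p.1.2⟩
  continuous_toFun := ((continuous_coneHomotopyFun hd hj).comp
    (continuous_subtype_val.prodMap continuous_subtype_val)).subtype_mk _
  map_zero_left κ := Subtype.ext (coneHomotopyFun_zero κ.1)
  map_one_left κ := Subtype.ext (coneHomotopyFun_one κ.1)

end WeakMetric

theorem statement6 (d : Y → Y → ℝ) (hd : IsWeakMetric d) (j : ℕ) (hj : 2 ≤ j) :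
    (∀ s ∈ Set.Icc (0 : ℝ) 1, ∀ κ ∈ ConeSet Y j, coneHomotopyFun d s κ ∈ ConeSet Y j) ∧
    (∀ κ ∈ ConeSet Y j, coneHomotopyFun d 0 κ = κ) ∧
    (∀ κ ∈ ConeSet Y j, coneHomotopyFun d 1 κ = phibarFun d (centersFun κ)) ∧
    Continuous (fun p : I × ↥(ConeSet Y j) => coneHomotopyFun d (p.1 : ℝ) p.2.1) ∧
    ∃ he : ContinuousMap.HomotopyEquiv ↥(ConeSet Y j) ↥(ConfigSet (ℝ × Y) j),
      (∀ κ : ↥(ConeSet Y j), (he.toFun κ : Fin j → ℝ × Y) = centersFun κ.1) ∧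
      (∀ κ' : ↥(ConfigSet (ℝ × Y) j), (he.invFun κ' : Fin j → ℝ × ℝ × Y) = phibarFun d κ'.1) := by
  refine ⟨fun s hs κ hκ => coneHomotopyFun_mem_coneSet hd hj hκ hs,
    fun κ _ => coneHomotopyFun_zero κ, fun κ _ => coneHomotopyFun_one κ,
    continuous_subtype_val.comp (coneHomotopy hd hj).continuous, ?_⟩
  exact ⟨⟨centersMap j, phibarMap hd hj, ⟨(coneHomotopy hd hj).symm⟩,
    centersMap_comp_phibarMap hd hj ▸ .refl _⟩, fun _ => rfl, fun _ => rfl⟩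

end
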